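/- arXiv:2510.15586 — 4 statements merged into one kernel-verified Lean document; each statement's English description precedes it below -/
import Mathlib

section
/- Let 1 ≤ m < n and let φ be an injective graph homomorphism from the hypercube Q_m to the hypercube Q_n (an embedding of Q_m as a proper sub-hypercube of Q_n). Then there exist an index k < n and a value b ∈ Bool such that every vertex in the image of φ has k-th coordinate equal to b; that is, the image of φ is contained in the facet of Q_n consisting of the vertices whose k-th coordinate is b. -/
/-- The hypercube graph `Q_n`: vertices are binary strings of length `n`,
adjacent iff they differ in exactly one coordinate. -/
def hypercubeGraph (n : ℕ) : SimpleGraph (Fin n → Bool) where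
  Adj x y := (Finset.univ.filter (fun k => x k ≠ y k)).card = 1
  symm := by
    constructor
    intro x y h
    have : (fun k => y k ≠ x k) = (fun k => x k ≠ y k) := by
      funext k; exact propext ne_comm
    simpa [this] using h
  loopless := by
    constructor
    intro x h
    simp at h

namespace HypercubeFacet

/-- Flip the `i`-th coordinate. -/
def flipc {n : ℕ} (i : Fin n) (v : Fin n → Bool) : Fin n → Bool :=
  Function.update v i (!(v i))

lemma flip_self {n : ℕ} (i : Fin n) (v : Fin n → Bool) : flipc i v i = !(v i) :=
  Function.update_self _ _ _

lemma flip_other {n : ℕ} {i j : Fin n} (h : j ≠ i) (v : Fin n → Bool) :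
    flipc i v j = v j :=
  Function.update_of_ne h _ _

lemma flip_flip {n : ℕ} (i : Fin n) (v : Fin n → Bool) : flipc i (flipc i v) = v := by
  funext j
  by_cases h : j = i
  · subst h; rw [flip_self, flip_self, Bool.not_not]
  · rw [flip_other h, flip_other h]

lemma flip_comm {n : ℕ} {i j : Fin n} (h : i ≠ j) (v : Fin n → Bool) :
    flipc i (flipc j v) = flipc j (flipc i v) := by
  funext l
  by_cases hi : l = i
  · subst hi
    rw [flip_self, flip_other h, flip_other h, flip_self]
  · by_cases hj : l = j
    · subst hj
      rw [flip_other (Ne.symm h), flip_self, flip_self, flip_other (Ne.symm h)]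
    · rw [flip_other hi, flip_other hj, flip_other hj, flip_other hi]

lemma adj_iff {n : ℕ} {x y : Fin n → Bool} :
    (hypercubeGraph n).Adj x y ↔ ∃ k, y = flipc k x := by
  constructor
  · intro h
    obtain ⟨k, hk⟩ : ∃ k, Finset.univ.filter (fun k => x k ≠ y k) = {k} :=
      Finset.card_eq_one.mp h
    refine ⟨k, funext fun l => ?_⟩
    by_cases hl : l = k
    · subst hl
      have hmem : l ∈ Finset.univ.filter (fun k => x k ≠ y k) := by
        rw [hk]; exact Finset.mem_singleton_self l
      have hne : x l ≠ y l := (Finset.mem_filter.mp hmem).2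
      rw [flip_self]
      revert hne; cases x l <;> cases y l <;> simp
    · have hnmem : l ∉ Finset.univ.filter (fun k => x k ≠ y k) := by
        rw [hk]; simpa using hl
      have heq : x l = y l := by
        by_contra hne
        exact hnmem (Finset.mem_filter.mpr ⟨Finset.mem_univ l, hne⟩)
      rw [flip_other hl, heq]
  · rintro ⟨k, rfl⟩
    show (Finset.univ.filter (fun l => x l ≠ flipc k x l)).card = 1
    have : Finset.univ.filter (fun l => x l ≠ flipc k x l) = {k} := by
      ext l
      simp only [Finset.mem_filter, Finset.mem_univ, true_and, Finset.mem_singleton]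
      by_cases hl : l = k
      · subst hl
        simp [flip_self]
      · simp [flip_other hl, hl]
    rw [this, Finset.card_singleton]

/-- Generic induction principle: a predicate stable under flips and true at `w`
holds everywhere. -/
lemma flip_induction {m : ℕ} (P : (Fin m → Bool) → Prop) (w : Fin m → Bool)
    (hw : P w) (hstep : ∀ v j, P v → P (flipc j v)) : ∀ v, P v := by
  have key : ∀ N v, (Finset.univ.filter (fun l => v l ≠ w l)).card = N → P v := by
    intro N
    induction N with
    | zero =>
      intro v h
      have hvw : v = w := by
        funext l
        by_contra hl
        have hmem : l ∈ Finset.univ.filter (fun l => v l ≠ w l) :=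
          Finset.mem_filter.mpr ⟨Finset.mem_univ l, hl⟩
        rw [Finset.card_eq_zero] at h
        rw [h] at hmem
        exact absurd hmem (Finset.notMem_empty l)
      exact hvw ▸ hw
    | succ N ih =>
      intro v h
      have hne : (Finset.univ.filter (fun l => v l ≠ w l)).Nonempty := by
        rw [← Finset.card_pos, h]; omega
      obtain ⟨j, hj⟩ := hne
      have hvj : v j ≠ w j := (Finset.mem_filter.mp hj).2
      have hwj : (!(v j)) = w j := by revert hvj; cases v j <;> cases w j <;> simp
      have hfilter : Finset.univ.filter (fun l => flipc j v l ≠ w l)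
          = (Finset.univ.filter (fun l => v l ≠ w l)).erase j := by
        ext l
        simp only [Finset.mem_filter, Finset.mem_univ, true_and, Finset.mem_erase]
        by_cases hl : l = j
        · subst hl
          simp [flip_self, hwj]
        · rw [flip_other hl]
          simp [hl]
      have hcard : (Finset.univ.filter (fun l => flipc j v l ≠ w l)).card = N := by
        rw [hfilter, Finset.card_erase_of_mem hj, h]
        omega
      have hPf : P (flipc j v) := ih (flipc j v) hcard
      have := hstep (flipc j v) j hPf
      rwa [flip_flip] at this
  intro v
  exact key _ v rfl

/-- If flipping `k'` then `k` returns to start, the indices agree. -/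
lemma flip_cancel {n : ℕ} {k k' : Fin n} {a : Fin n → Bool}
    (h : flipc k (flipc k' a) = a) : k = k' := by
  by_contra hne
  have := congrFun h k'
  rw [flip_other (fun hh => hne hh.symm), flip_self] at this
  revert this; cases a k' <;> simp

end HypercubeFacet

open HypercubeFacet in
/-- If `1 ≤ m < n` and `φ : Q_m → Q_n` is an injective graph
homomorphism, then the image of `φ` is contained in a facet of `Q_n`: there are an
index `k < n` and a value `b : Bool` such that every vertex in the image of `φ` has
`k`-th coordinate `b`. -/
theorem hypercube_embedding_in_facet {m n : ℕ} (hm : 1 ≤ m) (hmn : m < n)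
    (φ : hypercubeGraph m →g hypercubeGraph n) (hinj : Function.Injective φ) :
    ∃ (k : Fin n) (b : Bool), ∀ v : Fin m → Bool, φ v k = b := by
  classical
  have hadj : ∀ (v : Fin m → Bool) (i : Fin m), (hypercubeGraph m).Adj v (flipc i v) :=
    fun v i => adj_iff.mpr ⟨i, rfl⟩
  have hex : ∀ (v : Fin m → Bool) (i : Fin m), ∃ k, φ (flipc i v) = flipc k (φ v) :=
    fun v i => adj_iff.mp (φ.map_adj (hadj v i))
  set d : (Fin m → Bool) → Fin m → Fin n := fun v i => (hex v i).choose with hd_def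
  have hd : ∀ v i, φ (flipc i v) = flipc (d v i) (φ v) := fun v i => (hex v i).choose_spec
  -- key: d is invariant under flipping any coordinate of v
  have d_flip : ∀ (v : Fin m → Bool) (i j : Fin m), d (flipc j v) i = d v i := by
    intro v i j
    by_cases hij : j = i
    · subst hij
      have h1 : flipc (d (flipc j v) j) (flipc (d v j) (φ v)) = φ v := by
        rw [← hd, ← hd, HypercubeFacet.flip_flip]
      exact flip_cancel h1
    · -- square argument
      have hij' : i ≠ j := fun h => hij h.symm
      have h1 : φ (flipc i (flipc j v)) = flipc (d (flipc j v) i) (flipc (d v j) (φ v)) := by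
        rw [hd, hd]
      have h2 : φ (flipc j (flipc i v)) = flipc (d (flipc i v) j) (flipc (d v i) (φ v)) := by
        rw [hd, hd]
      have heq : flipc (d (flipc j v) i) (flipc (d v j) (φ v))
          = flipc (d (flipc i v) j) (flipc (d v i) (φ v)) := by
        rw [← h1, ← h2, flip_comm hij']
      -- d v i ≠ d v j
      have h12 : d v i ≠ d v j := by
        intro h
        have : φ (flipc i v) = φ (flipc j v) := by rw [hd, hd, h]
        have hfe := congrFun (hinj this) i
        rw [flip_self, flip_other hij'] at hfe
        revert hfe; cases v i <;> simp
      -- d v i ≠ d (flipc i v) j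
      have h14 : d v i ≠ d (flipc i v) j := by
        intro h
        have : φ (flipc j (flipc i v)) = φ v := by rw [h2, ← h, HypercubeFacet.flip_flip]
        have hfe := congrFun (hinj this) i
        rw [flip_other hij', flip_self] at hfe
        revert hfe; cases v i <;> simp
      by_contra h13
      have hfe := congrFun heq (d v i)
      rw [flip_other (fun hh : d v i = d (flipc j v) i => h13 hh.symm),
        flip_other h12, flip_other h14, flip_self] at hfe
      revert hfe; cases φ v (d v i) <;> simp
  set v₀ : Fin m → Bool := fun _ => false with hv₀
  have dconst : ∀ (i : Fin m) (v : Fin m → Bool), d v i = d v₀ i := by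
    intro i
    exact flip_induction (fun v => d v i = d v₀ i) v₀ rfl
      (fun v j hP => by show d (flipc j v) i = d v₀ i
                        rw [d_flip v i j]; exact hP)
  have hnotsurj : ∃ k : Fin n, ∀ i : Fin m, d v₀ i ≠ k := by
    by_contra hcon
    push_neg at hcon
    have hsurj : Function.Surjective (fun i => d v₀ i) := fun k => hcon k
    have := Fintype.card_le_of_surjective _ hsurj
    simp only [Fintype.card_fin] at this
    omega
  obtain ⟨k, hk⟩ := hnotsurj
  refine ⟨k, φ v₀ k, ?_⟩
  refine flip_induction (fun v => φ v k = φ v₀ k) v₀ rfl ?_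
  intro v j hP
  rw [hd v j, flip_other ?_]
  · exact hP
  · intro h
    exact hk j (by rw [← dconst j v, ← h])
end

section
/- Let n ≥ 1 and let G be a set of edges of Q_n that is closed under squares, in the following sense: whenever two edges of a square of Q_n that share a common vertex both belong to G, then all four edges of that square belong to G. Consider the graph whose edge set is G and whose vertex set is the set of vertices of Q_n incident to at least one edge of G. Then every connected component of this graph is a sub-hypercube of Q_n: its vertex set is a subcube S of Q_n and its edge set is the set of all edges of Q_n with both endpoints in S. -/
/-- Flip the `k`-th coordinate. -/
def hcFlip {n : ℕ} (x : Fin n → Bool) (k : Fin n) : Fin n → Bool :=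
  Function.update x k (!x k)

lemma hcFlip_flip {n : ℕ} (x : Fin n → Bool) (k : Fin n) : hcFlip (hcFlip x k) k = x := by
  funext ℓ
  by_cases h : ℓ = k
  · subst h; simp [hcFlip]
  · simp [hcFlip, Function.update_of_ne h]

lemma hc_adj_iff {n : ℕ} (x y : Fin n → Bool) :
    (hypercubeGraph n).Adj x y ↔ ∃ k, y = hcFlip x k := by
  constructor
  · intro h
    obtain ⟨k, hk⟩ := Finset.card_eq_one.mp h
    refine ⟨k, funext fun ℓ => ?_⟩
    by_cases hl : ℓ = k
    · subst hl
      have hmem : ℓ ∈ Finset.univ.filter (fun k => x k ≠ y k) :=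
        hk ▸ Finset.mem_singleton_self ℓ
      have hne : x ℓ ≠ y ℓ := (Finset.mem_filter.mp hmem).2
      simp only [hcFlip, Function.update_self]
      cases hx : x ℓ <;> cases hy : y ℓ <;> simp_all
    · have hmem : ℓ ∉ Finset.univ.filter (fun k => x k ≠ y k) := by
        rw [hk]; simpa using hl
      have : ¬ (x ℓ ≠ y ℓ) := by
        intro hne; exact hmem (Finset.mem_filter.mpr ⟨Finset.mem_univ _, hne⟩)
      push_neg at this
      rw [← this, hcFlip, Function.update_of_ne hl]
  · rintro ⟨k, rfl⟩
    show (Finset.univ.filter (fun ℓ => x ℓ ≠ hcFlip x k ℓ)).card = 1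
    have : Finset.univ.filter (fun ℓ => x ℓ ≠ hcFlip x k ℓ) = {k} := by
      ext ℓ
      by_cases hl : ℓ = k
      · subst hl; rw [Finset.mem_filter]; simp [hcFlip]
      · rw [Finset.mem_filter]; simp [hcFlip, Function.update_of_ne hl, hl]
    rw [this]; simp

/-- Let `G` be a subgraph (edge set) of `Q_n` that is closed under squares:
whenever two edges of a square of `Q_n` sharing a common vertex belong to `G`, all four
edges of that square belong to `G`.  Then every connected component of `G` is a
sub-hypercube of `Q_n`: its vertex set is a subcube `S` (the vertices agreeing with a base
point outside a set `K` of free coordinates) and its edges are all the `Q_n`-edges within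
`S`. -/
theorem squares_closed_components_are_subcubes {n : ℕ} (hn : 1 ≤ n)
    (G : SimpleGraph (Fin n → Bool)) (hle : G ≤ hypercubeGraph n)
    (hsq : ∀ (x : Fin n → Bool) (k ℓ : Fin n), k ≠ ℓ →
      G.Adj x (hcFlip x k) → G.Adj x (hcFlip x ℓ) →
      G.Adj (hcFlip x k) (hcFlip (hcFlip x k) ℓ) ∧
      G.Adj (hcFlip x ℓ) (hcFlip (hcFlip x ℓ) k))
    (v : Fin n → Bool) (hv : ∃ w, G.Adj v w) :
    ∃ K : Set (Fin n),
      (∀ w, G.Reachable v w ↔ ∀ ℓ ∉ K, w ℓ = v ℓ) ∧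
      (∀ a b, (∀ ℓ ∉ K, a ℓ = v ℓ) → (∀ ℓ ∉ K, b ℓ = v ℓ) →
        (hypercubeGraph n).Adj a b → G.Adj a b) := by
  -- single-step propagation of direction availability
  have step : ∀ (x y : Fin n → Bool) (k : Fin n), G.Adj x y → G.Adj x (hcFlip x k) →
      G.Adj y (hcFlip y k) := by
    intro x y k hxy hxk
    obtain ⟨ℓ, rfl⟩ := (hc_adj_iff x y).mp (hle hxy)
    by_cases hlk : ℓ = k
    · subst hlk; rw [hcFlip_flip]; exact hxy.symm
    · exact (hsq x ℓ k hlk hxy hxk).1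
  -- propagation along reachability
  have walkstep : ∀ (x y : Fin n → Bool), G.Reachable x y → ∀ k, G.Adj x (hcFlip x k) →
      G.Adj y (hcFlip y k) := by
    intro x y hxy
    obtain ⟨p⟩ := hxy
    induction p with
    | nil => intro k h; exact h
    | cons h q ih => intro k hk; exact ih k (step _ _ k h hk)
  -- reachable vertices agree in unavailable directions
  have forward : ∀ (u w : Fin n → Bool), G.Reachable u w →
      ∀ ℓ, ¬ G.Adj u (hcFlip u ℓ) → w ℓ = u ℓ := by
    intro u w hw
    obtain ⟨p⟩ := hw
    induction p with
    | nil => intro ℓ _; rfl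
    | @cons u b w h q ih =>
      intro ℓ hℓ
      obtain ⟨k, hb⟩ := (hc_adj_iff u b).mp (hle h)
      have hkl : k ≠ ℓ := by rintro rfl; exact hℓ (hb ▸ h)
      have hb2 : ¬ G.Adj b (hcFlip b ℓ) := fun hc => hℓ (step b u ℓ h.symm hc)
      have h1 : w ℓ = b ℓ := ih ℓ hb2
      have h2 : b ℓ = u ℓ := by
        rw [hb, hcFlip, Function.update_of_ne (Ne.symm hkl)]
      rw [h1, h2]
  -- vertices agreeing off K are reachable
  have backward : ∀ m (w : Fin n → Bool),
      (Finset.univ.filter fun k => w k ≠ v k).card ≤ m →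
      (∀ ℓ, ¬ G.Adj v (hcFlip v ℓ) → w ℓ = v ℓ) → G.Reachable v w := by
    intro m
    induction m with
    | zero =>
      intro w hc _
      have hwv : w = v := by
        funext ℓ
        by_contra h
        have hmem : ℓ ∈ Finset.univ.filter fun k => w k ≠ v k := by simp [h]
        have := Finset.card_pos.mpr ⟨ℓ, hmem⟩
        omega
      exact hwv ▸ SimpleGraph.Reachable.refl w
    | succ m ih =>
      intro w hc hagree
      by_cases hwv : w = v
      · exact hwv ▸ SimpleGraph.Reachable.refl w
      · have hex : ∃ k, w k ≠ v k := by
          by_contra h; push_neg at h; exact hwv (funext h)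
        obtain ⟨k, hk⟩ := hex
        have hkK : G.Adj v (hcFlip v k) := by
          by_contra hkn
          exact hk (hagree k hkn)
        set w' := hcFlip w k with hw'
        have hw'k : w' k = v k := by
          rw [hw', hcFlip, Function.update_self]
          cases hwk : w k <;> cases hvk : v k <;> simp_all
        have hagree' : ∀ ℓ, ¬ G.Adj v (hcFlip v ℓ) → w' ℓ = v ℓ := by
          intro ℓ hℓ
          by_cases hlk : ℓ = k
          · subst hlk; exact absurd hkK hℓ
          · rw [hw', hcFlip, Function.update_of_ne hlk]; exact hagree ℓ hℓ
        have hcard : (Finset.univ.filter fun j => w' j ≠ v j).card ≤ m := by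
          have hsub : (Finset.univ.filter fun j => w' j ≠ v j) ⊆
              (Finset.univ.filter fun j => w j ≠ v j).erase k := by
            intro j hj
            simp only [Finset.mem_filter, Finset.mem_erase, Finset.mem_univ, true_and] at hj ⊢
            by_cases hjk : j = k
            · subst hjk; exact absurd hw'k hj
            · refine ⟨hjk, ?_⟩
              rw [hw', hcFlip, Function.update_of_ne hjk] at hj
              exact hj
          have h1 := Finset.card_le_card hsub
          have h2 := Finset.card_erase_lt_of_mem
            (Finset.mem_filter.mpr ⟨Finset.mem_univ k, hk⟩ :
              k ∈ Finset.univ.filter fun j => w j ≠ v j)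
          omega
        have hreach' : G.Reachable v w' := ih w' hcard hagree'
        have hadj : G.Adj w' (hcFlip w' k) := walkstep v w' hreach' k hkK
        have hww : hcFlip w' k = w := by rw [hw', hcFlip_flip]
        exact hreach'.trans (hww ▸ hadj).reachable
  refine ⟨{k | G.Adj v (hcFlip v k)}, fun w => ⟨fun h ℓ hℓ => forward v w h ℓ hℓ,
    fun h => backward _ w le_rfl h⟩, ?_⟩
  intro a b ha hb hab
  obtain ⟨k, rfl⟩ := (hc_adj_iff a b).mp hab
  have hkK : G.Adj v (hcFlip v k) := by
    by_contra hkn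
    have h1 := ha k hkn
    have h2 := hb k hkn
    rw [hcFlip, Function.update_self, ← h1] at h2
    simp at h2
  have hra : G.Reachable v a := backward _ a le_rfl ha
  exact walkstep v a hra k hkK
end

section
/- Let k_1,…,k_m be indices < n, let 1 ≤ i < m with k_i ≠ k_{i+1}, and let ℓ_1,…,ℓ_m be the sequence obtained from k_1,…,k_m by swapping the entries k_i and k_{i+1}. Then for every vertex x of Q_n, p_[x; k_1…k_m] = − p_[x; ℓ_1…ℓ_m] in A. -/
/-- Adjacency in the hypercube `Q_n`. -/
def hcAdj {n : ℕ} (x y : Fin n → Bool) : Prop :=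
  (Finset.univ.filter (fun k => x k ≠ y k)).card = 1

/-- A vertex of `Q_n` is even if it has an even number of coordinates equal to `true`. -/
def hcEven {n : ℕ} (x : Fin n → Bool) : Prop :=
  (Finset.univ.filter (fun k => x k = true)).card % 2 = 0

instance {n : ℕ} (x : Fin n → Bool) : Decidable (hcEven x) :=
  inferInstanceAs (Decidable (_ = 0))

/-- `pathProd p x [k₁, …, kₘ] = p_{x₁} p_{x₂} ⋯ p_{x_{m+1}}` where `x₁ = x` and
`x_{s+1} = x_s # k_s`. -/
def pathProd {n : ℕ} {A : Type*} [Ring A] (p : (Fin n → Bool) → A) :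
    (Fin n → Bool) → List (Fin n) → A
  | x, [] => p x
  | x, k :: ks => p x * pathProd p (hcFlip x k) ks

/-! ### Auxiliary combinatorial lemmas about the hypercube -/

lemma hcFlip_apply_self {n : ℕ} (x : Fin n → Bool) (k : Fin n) :
    hcFlip x k k = !x k := by
  simp [hcFlip]

lemma hcFlip_apply_ne {n : ℕ} (x : Fin n → Bool) {k j : Fin n} (h : j ≠ k) :
    hcFlip x k j = x j := by
  simp [hcFlip, Function.update_apply, h]

lemma hcFlip_comm {n : ℕ} (x : Fin n → Bool) {a b : Fin n} (h : a ≠ b) :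
    hcFlip (hcFlip x a) b = hcFlip (hcFlip x b) a := by
  funext j
  by_cases hja : j = a
  · subst hja
    rw [hcFlip_apply_ne _ h, hcFlip_apply_self, hcFlip_apply_self,
      hcFlip_apply_ne _ h]
  · by_cases hjb : j = b
    · subst hjb
      rw [hcFlip_apply_self, hcFlip_apply_ne _ (Ne.symm h), hcFlip_apply_ne _ (Ne.symm h),
        hcFlip_apply_self]
    · rw [hcFlip_apply_ne _ hjb, hcFlip_apply_ne _ hja, hcFlip_apply_ne _ hja,
        hcFlip_apply_ne _ hjb]

lemma hcFlip_ne_self {n : ℕ} (x : Fin n → Bool) (k : Fin n) : hcFlip x k ≠ x := by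
  intro h
  have := congrFun h k
  rw [hcFlip_apply_self] at this
  cases x k <;> simp_all

lemma hcFlip_inj {n : ℕ} (x : Fin n → Bool) {a b : Fin n} (h : hcFlip x a = hcFlip x b) :
    a = b := by
  by_contra hab
  have := congrFun h a
  rw [hcFlip_apply_self, hcFlip_apply_ne _ hab] at this
  cases x a <;> simp_all

lemma hcAdj_flip {n : ℕ} (x : Fin n → Bool) (k : Fin n) : hcAdj x (hcFlip x k) := by
  have : (Finset.univ.filter (fun j => x j ≠ hcFlip x k j)) = {k} := by
    ext j
    simp only [Finset.mem_filter, Finset.mem_univ, true_and, Finset.mem_singleton]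
    by_cases hj : j = k
    · subst hj
      rw [hcFlip_apply_self]
      cases x j <;> simp
    · rw [hcFlip_apply_ne _ hj]
      simp [hj]
  rw [hcAdj, this, Finset.card_singleton]

lemma hcAdj_exists {n : ℕ} {x y : Fin n → Bool} (h : hcAdj x y) :
    ∃ k, y = hcFlip x k := by
  rw [hcAdj] at h
  obtain ⟨k, hk⟩ := Finset.card_eq_one.mp h
  refine ⟨k, funext fun j => ?_⟩
  by_cases hj : j = k
  · subst hj
    have hmem : j ∈ Finset.univ.filter (fun k => x k ≠ y k) := by
      rw [hk]; exact Finset.mem_singleton_self j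
    have hne : x j ≠ y j := (Finset.mem_filter.mp hmem).2
    rw [hcFlip_apply_self]
    revert hne
    cases x j <;> cases y j <;> simp
  · have : j ∉ Finset.univ.filter (fun k => x k ≠ y k) := by
      rw [hk, Finset.mem_singleton]; exact hj
    rw [Finset.mem_filter] at this
    push_neg at this
    rw [hcFlip_apply_ne _ hj]
    exact (this (Finset.mem_univ j)).symm

lemma hcEven_flip {n : ℕ} (x : Fin n → Bool) (k : Fin n) :
    hcEven (hcFlip x k) ↔ ¬ hcEven x := by
  classical
  set S : Finset (Fin n) := Finset.univ.filter (fun j => x j = true) with hS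
  have key : (Finset.univ.filter (fun j => hcFlip x k j = true)) =
      if x k = true then S.erase k else insert k S := by
    split_ifs with hk
    · ext j
      simp only [Finset.mem_filter, Finset.mem_univ, true_and, Finset.mem_erase, hS]
      by_cases hj : j = k
      · subst hj; rw [hcFlip_apply_self, hk]; simp
      · rw [hcFlip_apply_ne _ hj]; simp [hj]
    · ext j
      simp only [Finset.mem_filter, Finset.mem_univ, true_and, Finset.mem_insert, hS]
      by_cases hj : j = k
      · subst hj
        rw [hcFlip_apply_self]
        simp at hk
        rw [hk]; simp
      · rw [hcFlip_apply_ne _ hj]; simp [hj]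
  unfold hcEven
  rw [key]
  split_ifs with hk
  · have hkS : k ∈ S := by simp [hS, hk]
    rw [Finset.card_erase_of_mem hkS]
    have hpos : 1 ≤ S.card := Finset.card_pos.mpr ⟨k, hkS⟩
    rw [hS] at *
    omega
  · have hkS : k ∉ S := by simp [hS, hk]
    rw [Finset.card_insert_of_notMem hkS]
    rw [hS] at *
    omega

lemma hcAdj_of_adj_flip2 {n : ℕ} {x : Fin n → Bool} {a b c : Fin n} (hab : a ≠ b)
    (h : hcAdj (hcFlip (hcFlip x a) b) (hcFlip x c)) : c = a ∨ c = b := by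
  by_contra hc
  push_neg at hc
  obtain ⟨hca, hcb⟩ := hc
  set z := hcFlip (hcFlip x a) b with hz
  have hza : z a ≠ hcFlip x c a := by
    rw [hz, hcFlip_apply_ne _ hab, hcFlip_apply_self, hcFlip_apply_ne _ (Ne.symm hca)]
    cases x a <;> simp
  have hzb : z b ≠ hcFlip x c b := by
    rw [hz, hcFlip_apply_self, hcFlip_apply_ne _ (Ne.symm hab),
      hcFlip_apply_ne _ (Ne.symm hcb)]
    cases x b <;> simp
  have hzc : z c ≠ hcFlip x c c := by
    rw [hz, hcFlip_apply_ne _ hcb, hcFlip_apply_ne _ hca, hcFlip_apply_self]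
    cases x c <;> simp
  have hsub : ({a, b, c} : Finset (Fin n)) ⊆
      Finset.univ.filter (fun j => z j ≠ hcFlip x c j) := by
    intro j hj
    simp only [Finset.mem_insert, Finset.mem_singleton] at hj
    rcases hj with rfl | rfl | rfl <;> simp_all
  have hcard : ({a, b, c} : Finset (Fin n)).card = 3 := by
    rw [Finset.card_insert_of_notMem (by simp [hab, Ne.symm hca]),
      Finset.card_insert_of_notMem (by simp [Ne.symm hcb])]
    rfl
  have := Finset.card_le_card hsub
  rw [hcard, h] at this
  omega

lemma hcAdj_symm {n : ℕ} {x y : Fin n → Bool} (h : hcAdj x y) : hcAdj y x := by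
  unfold hcAdj at *
  have : (Finset.univ.filter (fun k => y k ≠ x k)) =
      (Finset.univ.filter (fun k => x k ≠ y k)) := by
    ext j; simp [ne_comm]
  rw [this]
  exact h

/-! ### Algebraic lemmas -/

section Alg

variable {A : Type*} [CStarAlgebra A]

/-- Projections summing to 1 are mutually orthogonal. -/
lemma ortho_of_sum_one {ι : Type*} [DecidableEq ι] (s : Finset ι) (q : ι → A)
    (hq : ∀ i ∈ s, IsSelfAdjoint (q i) ∧ q i * q i = q i)
    (hs : ∑ i ∈ s, q i = 1) {i j : ι} (hi : i ∈ s) (hj : j ∈ s) (hij : i ≠ j) :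
    q i * q j = 0 := by
  let _ := CStarAlgebra.spectralOrder A
  have _ := CStarAlgebra.spectralOrderedRing A
  have herase : ∑ k ∈ s.erase i, q k = 1 - q i := by
    have h := Finset.add_sum_erase s q hi
    rw [hs] at h
    exact eq_sub_of_add_eq' h
  have hterm : ∀ k ∈ s.erase i, q i * q k * q i = star (q k * q i) * (q k * q i) := by
    intro k hk
    have hks := Finset.mem_of_mem_erase hk
    have h1 : star (q k * q i) * (q k * q i) = q i * (q k * q k) * q i := by
      rw [star_mul, (hq k hks).1.star_eq, (hq i hi).1.star_eq]
      noncomm_ring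
    rw [h1, (hq k hks).2]
  have hsum0 : ∑ k ∈ s.erase i, q i * q k * q i = 0 := by
    calc ∑ k ∈ s.erase i, q i * q k * q i
        = q i * (∑ k ∈ s.erase i, q k) * q i := by
          rw [Finset.mul_sum, Finset.sum_mul]
      _ = 0 := by rw [herase, mul_sub, mul_one, (hq i hi).2, sub_self, zero_mul]
  have hj' : j ∈ s.erase i := Finset.mem_erase.mpr ⟨Ne.symm hij, hj⟩
  have hzero : q i * q j * q i = 0 :=
    (Finset.sum_eq_zero_iff_of_nonneg (fun k hk => by
      rw [hterm k hk]; exact star_mul_self_nonneg _)).mp hsum0 j hj'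
  have hji : q j * q i = 0 := by
    rw [← CStarRing.star_mul_self_eq_zero_iff (q j * q i), ← hterm j hj']
    exact hzero
  calc q i * q j = star (q j * q i) := by
        rw [star_mul, (hq i hi).1.star_eq, (hq j hj).1.star_eq]
    _ = 0 := by rw [hji, star_zero]

/-- Two of the terms `y * q w * z` cancel when all others vanish. -/
lemma pair_neg {ι : Type*} [DecidableEq ι] (T : Finset ι) (q : ι → A)
    (hT : ∑ w ∈ T, q w = 1) (y z : A) {wa wb : ι}
    (ha : wa ∈ T) (hb : wb ∈ T) (hne : wa ≠ wb)
    (hvanish : ∀ w ∈ T, w ≠ wa → w ≠ wb → y * q w * z = 0)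
    (hyz : y * z = 0) :
    y * q wa * z = - (y * q wb * z) := by
  have hsum : ∑ w ∈ T, y * q w * z = 0 := by
    calc ∑ w ∈ T, y * q w * z = y * (∑ w ∈ T, q w) * z := by
          rw [Finset.mul_sum, Finset.sum_mul]
      _ = 0 := by rw [hT, mul_one, hyz]
  have hsub : ({wa, wb} : Finset ι) ⊆ T :=
    Finset.insert_subset ha (Finset.singleton_subset_iff.mpr hb)
  have hpair : ∑ w ∈ T, y * q w * z = ∑ w ∈ ({wa, wb} : Finset ι), y * q w * z := by
    refine (Finset.sum_subset hsub fun w hw hnw => ?_).symm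
    simp only [Finset.mem_insert, Finset.mem_singleton, not_or] at hnw
    exact hvanish w hw hnw.1 hnw.2
  rw [hpair, Finset.sum_pair hne] at hsum
  exact eq_neg_of_add_eq_zero_left hsum

end Alg

/-- Let `A` be a unital C*-algebra and `p` a family of projections
indexed by the vertices of `Q_n` satisfying (GP1) and (GP2).  Swapping two adjacent,
distinct indices `a ≠ b` in the sequence of flip directions changes the sign of the
associated path element: `p_[x; …ab…] = − p_[x; …ba…]`. -/
theorem pathProd_swap_neg {n : ℕ} (hn : 1 ≤ n)
    {A : Type*} [CStarAlgebra A]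
    (p : (Fin n → Bool) → A)
    (hproj : ∀ x, IsSelfAdjoint (p x) ∧ p x * p x = p x)
    (hGP1e : ∑ x ∈ Finset.univ.filter (fun x => hcEven x), p x = 1)
    (hGP1o : ∑ x ∈ Finset.univ.filter (fun x => ¬ hcEven x), p x = 1)
    (hGP2 : ∀ i j, hcEven i → ¬ hcEven j → ¬ hcAdj i j → p i * p j = 0)
    (x : Fin n → Bool) (l₁ l₂ : List (Fin n)) (a b : Fin n) (hab : a ≠ b) :
    pathProd p x (l₁ ++ a :: b :: l₂) = - pathProd p x (l₁ ++ b :: a :: l₂) := by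
  have hsa : ∀ y, star (p y) = p y := fun y => (hproj y).1.star_eq
  have hidem : ∀ y, p y * p y = p y := fun y => (hproj y).2
  -- orthogonality of distinct projections of the same parity
  have hsame : ∀ u v : Fin n → Bool, u ≠ v → (hcEven u ↔ hcEven v) → p u * p v = 0 := by
    intro u v huv hpar
    by_cases he : hcEven u
    · exact ortho_of_sum_one _ p (fun i _ => hproj i) hGP1e
        (Finset.mem_filter.mpr ⟨Finset.mem_univ _, he⟩)
        (Finset.mem_filter.mpr ⟨Finset.mem_univ _, hpar.mp he⟩) huv
    · exact ortho_of_sum_one _ p (fun i _ => hproj i) hGP1o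
        (Finset.mem_filter.mpr ⟨Finset.mem_univ _, he⟩)
        (Finset.mem_filter.mpr ⟨Finset.mem_univ _, fun h => he (hpar.mpr h)⟩) huv
  -- orthogonality of opposite-parity, non-adjacent projections
  have hopp : ∀ u v : Fin n → Bool, (hcEven u ↔ ¬ hcEven v) → ¬ hcAdj u v →
      p u * p v = 0 := by
    intro u v hpar hadj
    by_cases he : hcEven u
    · exact hGP2 u v he (hpar.mp he) hadj
    · have hv : hcEven v := by
        by_contra hv; exact he (hpar.mpr hv)
      have h0 : p v * p u = 0 := hGP2 v u hv he (fun h => hadj (hcAdj_symm h))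
      calc p u * p v = star (p v * p u) := by rw [star_mul, hsa, hsa]
        _ = 0 := by rw [h0, star_zero]
  -- the key three-term identity
  have key : ∀ (y : Fin n → Bool), p y * p (hcFlip y a) * p (hcFlip (hcFlip y a) b) =
      - (p y * p (hcFlip y b) * p (hcFlip (hcFlip y a) b)) := by
    intro y
    set z := hcFlip (hcFlip y a) b with hz
    have hpz : hcEven z ↔ hcEven y := by rw [hz, hcEven_flip, hcEven_flip, not_not]
    have hzy : z ≠ y := by
      intro h
      have h2 : z a = y a := congrFun h a
      rw [hz, hcFlip_apply_ne _ hab, hcFlip_apply_self] at h2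
      exact Bool.not_ne_self (y a) h2
    have hyz : p y * p z = 0 := by
      calc p y * p z = star (p z * p y) := by rw [star_mul, hsa, hsa]
        _ = 0 := by rw [hsame z y hzy hpz, star_zero]
    have hvan : ∀ w : Fin n → Bool, w ≠ hcFlip y a → w ≠ hcFlip y b →
        (hcEven w ↔ ¬ hcEven y) → p y * p w * p z = 0 := by
      intro w hwa hwb hwpar
      by_cases hadj : hcAdj y w
      · obtain ⟨c, rfl⟩ := hcAdj_exists hadj
        have hca : c ≠ a := fun h => hwa (by rw [h])
        have hcb : c ≠ b := fun h => hwb (by rw [h])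
        have hnadj : ¬ hcAdj z (hcFlip y c) := by
          intro h
          rw [hz] at h
          rcases hcAdj_of_adj_flip2 hab h with h' | h'
          exacts [hca h', hcb h']
        have h0 : p (hcFlip y c) * p z = 0 := by
          refine hopp _ _ ?_ (fun h => hnadj (hcAdj_symm h))
          rw [hcEven_flip, hpz]
        rw [mul_assoc, h0, mul_zero]
      · have h0 : p y * p w = 0 := by
          refine hopp y w ?_ hadj
          tauto
        rw [h0, zero_mul]
    by_cases hy : hcEven y
    · refine pair_neg (Finset.univ.filter (fun w => ¬ hcEven w)) p hGP1o (p y) (p z)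
        (Finset.mem_filter.mpr ⟨Finset.mem_univ _, by rw [hcEven_flip]; tauto⟩)
        (Finset.mem_filter.mpr ⟨Finset.mem_univ _, by rw [hcEven_flip]; tauto⟩)
        (fun h => hab (hcFlip_inj y h)) ?_ hyz
      intro w hw hwa hwb
      have hwpar : hcEven w ↔ ¬ hcEven y := by
        have := (Finset.mem_filter.mp hw).2; tauto
      exact hvan w hwa hwb hwpar
    · refine pair_neg (Finset.univ.filter (fun w => hcEven w)) p hGP1e (p y) (p z)
        (Finset.mem_filter.mpr ⟨Finset.mem_univ _, by rw [hcEven_flip]; tauto⟩)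
        (Finset.mem_filter.mpr ⟨Finset.mem_univ _, by rw [hcEven_flip]; tauto⟩)
        (fun h => hab (hcFlip_inj y h)) ?_ hyz
      intro w hw hwa hwb
      have hwpar : hcEven w ↔ ¬ hcEven y := by
        have := (Finset.mem_filter.mp hw).2; tauto
      exact hvan w hwa hwb hwpar
  -- absorption
  have habsorb : ∀ (y : Fin n → Bool) (l : List (Fin n)),
      p y * pathProd p y l = pathProd p y l := by
    intro y l
    cases l with
    | nil => exact hidem y
    | cons k ks => rw [pathProd, ← mul_assoc, hidem]
  -- swapping at the head
  have hswap : ∀ (y : Fin n → Bool) (l : List (Fin n)),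
      pathProd p y (a :: b :: l) = - pathProd p y (b :: a :: l) := by
    intro y l
    have hc : hcFlip (hcFlip y b) a = hcFlip (hcFlip y a) b := (hcFlip_comm y hab).symm
    show p y * (p (hcFlip y a) * pathProd p (hcFlip (hcFlip y a) b) l) =
      - (p y * (p (hcFlip y b) * pathProd p (hcFlip (hcFlip y b) a) l))
    rw [hc]
    set z := hcFlip (hcFlip y a) b with hz
    rw [← habsorb z l]
    calc p y * (p (hcFlip y a) * (p z * pathProd p z l))
        = p y * p (hcFlip y a) * p z * pathProd p z l := by noncomm_ring
      _ = - (p y * p (hcFlip y b) * p z) * pathProd p z l := by rw [key y]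
      _ = - (p y * (p (hcFlip y b) * (p z * pathProd p z l))) := by noncomm_ring
  -- induction on the prefix
  induction l₁ generalizing x with
  | nil => exact hswap x l₂
  | cons k ks ih =>
    show p x * pathProd p (hcFlip x k) (ks ++ a :: b :: l₂) =
      - (p x * pathProd p (hcFlip x k) (ks ++ b :: a :: l₂))
    rw [ih (hcFlip x k), mul_neg]
end

section
/- Let μ = [x; k_1…k_m] and ν = [x; ℓ_1…ℓ_{m'}] be two loops in Q_n starting at the same vertex x, i.e. applying the coordinate flips k_1,…,k_m in succession to x returns x, and likewise for ℓ_1,…,ℓ_{m'}. Then p_μ p_ν = p_ν p_μ in A. -/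
namespace HC
variable {n : ℕ}

lemma flip_apply (x : Fin n → Bool) (k i : Fin n) :
    hcFlip x k i = if i = k then !x k else x i := by
  simp [hcFlip, Function.update]

lemma flip_flip (x : Fin n → Bool) (k : Fin n) : hcFlip (hcFlip x k) k = x := by
  funext i
  rcases eq_or_ne i k with rfl | h
  · simp [flip_apply]
  · simp [flip_apply, h]

lemma flip_comm (x : Fin n → Bool) (k l : Fin n) :
    hcFlip (hcFlip x k) l = hcFlip (hcFlip x l) k := by
  rcases eq_or_ne k l with rfl | h
  · rfl
  funext i
  simp only [flip_apply]
  split_ifs with h1 h2 h2 <;> simp_all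

lemma flip_ne (x : Fin n → Bool) (k : Fin n) : hcFlip x k ≠ x := by
  intro h
  have := congrFun h k
  simp [flip_apply] at this

lemma diff_filter_flip (x : Fin n → Bool) (k : Fin n) :
    (Finset.univ.filter (fun i => x i ≠ hcFlip x k i)) = {k} := by
  ext i
  simp only [Finset.mem_filter, Finset.mem_univ, true_and, Finset.mem_singleton, flip_apply]
  rcases eq_or_ne i k with rfl | h
  · cases x i <;> simp
  · simp [h]

lemma adj_flip (x : Fin n → Bool) (k : Fin n) : hcAdj x (hcFlip x k) := by
  rw [hcAdj, diff_filter_flip]; rfl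

lemma adj_comm {x y : Fin n → Bool} (h : hcAdj x y) : hcAdj y x := by
  rw [hcAdj] at h ⊢
  rw [show (Finset.univ.filter (fun k => y k ≠ x k)) =
      (Finset.univ.filter (fun k => x k ≠ y k)) by ext i; simp [ne_comm]]
  exact h

lemma adj_exists {x y : Fin n → Bool} (h : hcAdj x y) : ∃ k, y = hcFlip x k := by
  rw [hcAdj, Finset.card_eq_one] at h
  obtain ⟨k, hk⟩ := h
  refine ⟨k, ?_⟩
  have hmem : ∀ i, (x i ≠ y i) ↔ i = k := by
    intro i
    have := Finset.ext_iff.mp hk i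
    simpa using this
  funext i
  rcases eq_or_ne i k with rfl | h'
  · have : x i ≠ y i := (hmem i).mpr rfl
    rw [flip_apply, if_pos rfl]
    cases hxi : x i <;> cases hyi : y i <;> simp_all
  · have : ¬ (x i ≠ y i) := fun hc => h' ((hmem i).mp hc)
    rw [flip_apply, if_neg h']
    tauto

lemma flip_ne_flip {x : Fin n → Bool} {k l : Fin n} (h : k ≠ l) :
    hcFlip x k ≠ hcFlip x l := by
  intro hc
  have := congrFun hc k
  simp [flip_apply, h] at this

lemma flip_flip_ne {x : Fin n → Bool} {k l : Fin n} (h : k ≠ l) :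
    hcFlip (hcFlip x k) l ≠ x := by
  intro hc
  have := congrFun hc l
  simp [flip_apply, h.symm] at this

lemma not_adj_far {z : Fin n → Bool} {k l a : Fin n} (hkl : k ≠ l) (hak : a ≠ k) (hal : a ≠ l) :
    ¬ hcAdj (hcFlip z a) (hcFlip (hcFlip z k) l) := by
  rw [hcAdj]
  have : (Finset.univ.filter (fun i => hcFlip z a i ≠ hcFlip (hcFlip z k) l i))
      = {a, k, l} := by
    ext i
    simp only [Finset.mem_filter, Finset.mem_univ, true_and, Finset.mem_insert,
      Finset.mem_singleton, flip_apply]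
    rcases eq_or_ne i a with rfl | hia
    · cases hz : z i <;> simp_all
    rcases eq_or_ne i k with rfl | hik
    · cases hz : z i <;> simp_all
    rcases eq_or_ne i l with rfl | hil
    · cases hz : z i <;> simp_all
    · simp [hia, hik, hil]
  rw [this]
  rw [Finset.card_insert_of_notMem (by simp [hak, hal]),
    Finset.card_insert_of_notMem (by simp [hkl])]
  simp

lemma even_flip (x : Fin n → Bool) (k : Fin n) : hcEven (hcFlip x k) ↔ ¬ hcEven x := by
  have key : (Finset.univ.filter (fun i => hcFlip x k i = true)).card
      = if x k then (Finset.univ.filter (fun i => x i = true)).card - 1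
        else (Finset.univ.filter (fun i => x i = true)).card + 1 := by
    cases hxk : x k
    · have h2 : (Finset.univ.filter (fun i => hcFlip x k i = true))
          = insert k (Finset.univ.filter (fun i => x i = true)) := by
        ext i
        simp only [Finset.mem_filter, Finset.mem_univ, true_and, Finset.mem_insert, flip_apply]
        rcases eq_or_ne i k with rfl | h
        · simp [hxk]
        · simp [h]
      rw [h2, Finset.card_insert_of_notMem (by simp [hxk]), if_neg (by simp [hxk])]
    · have h2 : (Finset.univ.filter (fun i => x i = true))
          = insert k (Finset.univ.filter (fun i => hcFlip x k i = true)) := by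
        ext i
        simp only [Finset.mem_filter, Finset.mem_univ, true_and, Finset.mem_insert, flip_apply]
        rcases eq_or_ne i k with rfl | h
        · simp [hxk]
        · simp [h]
      rw [if_pos (by simp [hxk]), h2, Finset.card_insert_of_notMem (by simp [flip_apply, hxk])]
      simp
  rw [hcEven, hcEven, key]
  cases hxk : x k
  · rw [if_neg (by simp [hxk])]
    omega
  · rw [if_pos (by simp [hxk])]
    have h1 : 1 ≤ (Finset.univ.filter (fun i => x i = true)).card :=
      Finset.card_pos.mpr ⟨k, by simp [hxk]⟩
    omega

lemma foldl_apply (ks : List (Fin n)) (x : Fin n → Bool) (v : Fin n) :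
    (ks.foldl hcFlip x) v = if ks.count v % 2 = 0 then x v else !(x v) := by
  induction ks generalizing x with
  | nil => simp
  | cons k t ih =>
    rw [List.foldl_cons, ih]
    rcases eq_or_ne k v with rfl | h
    · have h1 : (k :: t).count k = t.count k + 1 := by simp [List.count_cons]
      rw [h1]
      have h2 : hcFlip x k k = !x k := by simp [flip_apply]
      rw [h2]
      rcases Nat.even_or_odd (t.count k) with he | ho
      · have h3 := Nat.even_iff.mp he
        rw [if_pos h3, if_neg (by omega)]
      · have h3 := Nat.odd_iff.mp ho
        rw [if_neg (by omega), if_pos (by omega)]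
        simp
    · have h1 : (k :: t).count v = t.count v := by simp [List.count_cons, h]
      rw [h1, show hcFlip x k v = x v by simp [flip_apply, h.symm]]

lemma loop_count_even {ks : List (Fin n)} {x : Fin n → Bool}
    (h : ks.foldl hcFlip x = x) (v : Fin n) : Even (ks.count v) := by
  have := congrFun h v
  rw [foldl_apply] at this
  rw [Nat.even_iff]
  by_contra hc
  rw [if_neg hc] at this
  cases x v <;> simp_all

lemma foldl_perm {ks ls : List (Fin n)} (h : ks.Perm ls) (x : Fin n → Bool) :
    ks.foldl hcFlip x = ls.foldl hcFlip x := by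
  haveI : RightCommutative (hcFlip (n := n)) := ⟨fun x k l => (flip_comm x k l)⟩
  exact h.foldl_eq x



variable {n : ℕ} {A : Type*} [CStarAlgebra A]

lemma ortho_of_sum_one {V : Type*} [DecidableEq V] (q : V → A)
    (hq : ∀ v, IsSelfAdjoint (q v) ∧ q v * q v = q v)
    (S : Finset V) (hsum : ∑ v ∈ S, q v = 1)
    {i j : V} (hi : i ∈ S) (hj : j ∈ S) (hij : i ≠ j) : q i * q j = 0 := by
  letI := CStarAlgebra.spectralOrder A
  haveI := CStarAlgebra.spectralOrderedRing A
  have key : ∑ v ∈ S.erase j, q j * q v * q j = 0 := by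
    have h1 : ∑ v ∈ S, q j * q v * q j = q j := by
      rw [← Finset.sum_mul, ← Finset.mul_sum, hsum, mul_one, (hq j).2]
    rw [← Finset.add_sum_erase _ _ hj] at h1
    have h2 : q j * q j * q j = q j := by rw [(hq j).2, (hq j).2]
    rw [h2] at h1
    exact (add_eq_left).mp h1
  have hterm : ∀ v ∈ S.erase j, q j * q v * q j = star (q v * q j) * (q v * q j) := by
    intro v _
    rw [star_mul, (hq v).1.star_eq, (hq j).1.star_eq]
    rw [show q j * q v * (q v * q j) = q j * (q v * q v) * q j by noncomm_ring,
      (hq v).2]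
  have hnn : ∀ v ∈ S.erase j, (0 : A) ≤ q j * q v * q j := by
    intro v hv
    rw [hterm v hv]
    exact star_mul_self_nonneg _
  have hz : q j * q i * q j = 0 :=
    (Finset.sum_eq_zero_iff_of_nonneg hnn).mp key i (Finset.mem_erase.mpr ⟨hij, hi⟩)
  rw [hterm i (Finset.mem_erase.mpr ⟨hij, hi⟩)] at hz
  exact (CStarRing.star_mul_self_eq_zero_iff _).mp hz

variable (p : (Fin n → Bool) → A)

/-- Distinct vertices of the same parity give orthogonal projections. -/
lemma same_parity_orth
    (hproj : ∀ x, IsSelfAdjoint (p x) ∧ p x * p x = p x)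
    (hGP1e : ∑ x ∈ Finset.univ.filter (fun x => hcEven x), p x = 1)
    (hGP1o : ∑ x ∈ Finset.univ.filter (fun x => ¬ hcEven x), p x = 1)
    {i j : Fin n → Bool} (hpar : hcEven i ↔ hcEven j) (hij : i ≠ j) :
    p i * p j = 0 := by
  by_cases hi : hcEven i
  · exact ortho_of_sum_one p hproj _ hGP1e (by simp [hi]) (by simp [hpar.mp hi]) hij
  · exact ortho_of_sum_one p hproj _ hGP1o (by simp [hi])
      (by simpa using fun h => hi (hpar.mpr h)) hij

/-- Non-adjacent vertices of opposite parity give orthogonal projections (both orders). -/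
lemma opp_orth
    (hproj : ∀ x, IsSelfAdjoint (p x) ∧ p x * p x = p x)
    (hGP2 : ∀ i j, hcEven i → ¬ hcEven j → ¬ hcAdj i j → p i * p j = 0)
    {i j : Fin n → Bool} (hpar : hcEven i ↔ ¬ hcEven j) (hadj : ¬ hcAdj i j) :
    p i * p j = 0 := by
  by_cases hi : hcEven i
  · exact hGP2 i j hi (hpar.mp hi) hadj
  · have hj : hcEven j := by by_contra hc; exact hi (hpar.mpr hc)
    have h0 : p j * p i = 0 := hGP2 j i hj hi (fun h => hadj (adj_comm h))
    calc p i * p j = star (p j * p i) := by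
          rw [star_mul, (hproj i).1.star_eq, (hproj j).1.star_eq]
      _ = 0 := by rw [h0, star_zero]

/-- The diamond relation. -/
lemma diamond
    (hproj : ∀ x, IsSelfAdjoint (p x) ∧ p x * p x = p x)
    (hGP1e : ∑ x ∈ Finset.univ.filter (fun x => hcEven x), p x = 1)
    (hGP1o : ∑ x ∈ Finset.univ.filter (fun x => ¬ hcEven x), p x = 1)
    (hGP2 : ∀ i j, hcEven i → ¬ hcEven j → ¬ hcAdj i j → p i * p j = 0)
    {z : Fin n → Bool} {k l : Fin n} (hkl : k ≠ l) :
    p z * p (hcFlip z k) * p (hcFlip (hcFlip z k) l)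
      = - (p z * p (hcFlip z l) * p (hcFlip (hcFlip z l) k)) := by
  set w := hcFlip (hcFlip z k) l with hw
  have hw' : hcFlip (hcFlip z l) k = w := (flip_comm z l k).symm ▸ (flip_comm z k l).symm
  have hparw : hcEven w ↔ hcEven z := by
    rw [hw, even_flip, even_flip]; tauto
  have hzw : z ≠ w := fun h => flip_flip_ne hkl h.symm
  have h0 : p z * p w = 0 := same_parity_orth p hproj hGP1e hGP1o hparw.symm hzw
  -- the set of vertices of parity opposite to z
  set S := Finset.univ.filter (fun j => hcEven j ↔ ¬ hcEven z) with hS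
  have hsumS : ∑ j ∈ S, p j = 1 := by
    by_cases hz : hcEven z
    · rw [show S = Finset.univ.filter (fun x => ¬ hcEven x) by
        ext j; simp [hS, hz]]
      exact hGP1o
    · rw [show S = Finset.univ.filter (fun x => hcEven x) by
        ext j; simp [hS, hz]]
      exact hGP1e
  have hexp : ∑ j ∈ S, p z * p j * p w = 0 := by
    rw [← Finset.sum_mul, ← Finset.mul_sum, hsumS, mul_one, h0]
  have hTS : ({hcFlip z k, hcFlip z l} : Finset (Fin n → Bool)) ⊆ S := by
    intro j hj
    rcases Finset.mem_insert.mp hj with rfl | hj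
    · simp [hS, even_flip]
    · rw [Finset.mem_singleton.mp hj]
      simp [hS, even_flip]
  have hzero : ∀ j ∈ S, j ∉ ({hcFlip z k, hcFlip z l} : Finset (Fin n → Bool)) →
      p z * p j * p w = 0 := by
    intro j hjS hjT
    have hjpar : hcEven j ↔ ¬ hcEven z := by
      have := Finset.mem_filter.mp hjS; tauto
    by_cases hadj : hcAdj z j
    · obtain ⟨a, rfl⟩ := adj_exists hadj
      have hak : a ≠ k := fun h => by simp [h] at hjT
      have hal : a ≠ l := fun h => by simp [h] at hjT
      have : p (hcFlip z a) * p w = 0 := by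
        refine opp_orth p hproj hGP2 ?_ (not_adj_far hkl hak hal)
        rw [even_flip]
        exact not_congr hparw.symm
      rw [mul_assoc, this, mul_zero]
    · have : p z * p j = 0 := opp_orth p hproj hGP2 (by tauto) hadj
      rw [this, zero_mul]
  have hsplit : ∑ j ∈ S, p z * p j * p w
      = ∑ j ∈ ({hcFlip z k, hcFlip z l} : Finset (Fin n → Bool)), p z * p j * p w :=
    (Finset.sum_subset hTS (fun j hj hj' => hzero j hj hj')).symm
  rw [hsplit, Finset.sum_pair (flip_ne_flip hkl)] at hexp
  rw [eq_neg_iff_add_eq_zero, hw']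
  exact hexp


@[simp] lemma pathProd_nil (x : Fin n → Bool) : pathProd p x [] = p x := rfl
@[simp] lemma pathProd_cons (x : Fin n → Bool) (k : Fin n) (ks : List (Fin n)) :
    pathProd p x (k :: ks) = p x * pathProd p (hcFlip x k) ks := rfl

lemma comm_sign (a b : A) (m : ℕ) : a * ((-1 : A) ^ m * b) = (-1 : A) ^ m * (a * b) := by
  rw [← mul_assoc, ((Commute.neg_one_right a).pow_right m).eq, mul_assoc]

section Paths

variable (hidem : ∀ x : Fin n → Bool, p x * p x = p x)
variable (hdia : ∀ (z : Fin n → Bool) (k l : Fin n), k ≠ l →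
    p z * p (hcFlip z k) * p (hcFlip (hcFlip z k) l)
      = - (p z * p (hcFlip z l) * p (hcFlip (hcFlip z k) l)))

include hidem in
lemma p_mul_pathProd (x : Fin n → Bool) (ks : List (Fin n)) :
    p x * pathProd p x ks = pathProd p x ks := by
  cases ks with
  | nil => exact hidem x
  | cons k t => rw [pathProd_cons, ← mul_assoc, hidem x]

include hidem in
lemma pathProd_append (x : Fin n → Bool) (as bs : List (Fin n)) :
    pathProd p x (as ++ bs) = pathProd p x as * pathProd p (as.foldl hcFlip x) bs := by
  induction as generalizing x with
  | nil =>
    rw [List.nil_append, List.foldl_nil]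
    exact (p_mul_pathProd p hidem x bs).symm
  | cons k t ih =>
    rw [List.cons_append, pathProd_cons, ih, pathProd_cons, mul_assoc, List.foldl_cons]

include hidem hdia in
lemma pathProd_swap (x : Fin n → Bool) (a : List (Fin n)) {k l : Fin n} (hkl : k ≠ l)
    (b : List (Fin n)) :
    pathProd p x (a ++ k :: l :: b) = - pathProd p x (a ++ l :: k :: b) := by
  induction a generalizing x with
  | nil =>
    simp only [List.nil_append, pathProd_cons]
    rw [← p_mul_pathProd p hidem (hcFlip (hcFlip x k) l) b,
      ← p_mul_pathProd p hidem (hcFlip (hcFlip x l) k) b, flip_comm x l k]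
    simp only [← mul_assoc]
    rw [hdia x k l hkl]
    simp only [neg_mul]
  | cons c t ih =>
    rw [List.cons_append, List.cons_append, pathProd_cons, pathProd_cons, ih, mul_neg]

/-- The number of elements of `t` distinct from `k`. -/
def distCount (k : Fin n) (t : List (Fin n)) : ℕ := (t.filter (fun a => a ≠ k)).length

/-- The exponent of the sign relating a path product to its reversal. -/
def epsExp : List (Fin n) → ℕ
  | [] => 0
  | k :: t => distCount k t + epsExp t

include hidem hdia in
lemma pathProd_rotate (x : Fin n → Bool) (k : Fin n) (t : List (Fin n)) :
    pathProd p x (k :: t) = (-1 : A) ^ (distCount k t) * pathProd p x (t ++ [k]) := by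
  induction t generalizing x with
  | nil => simp [distCount]
  | cons a s ih =>
    rcases eq_or_ne a k with rfl | hak
    · have hd : distCount a (a :: s) = distCount a s := by simp [distCount]
      rw [hd, pathProd_cons, ih, comm_sign, List.cons_append, pathProd_cons]
    · have hd : distCount k (a :: s) = distCount k s + 1 := by
        simp [distCount, List.filter_cons, hak]
      have hswap := pathProd_swap p hidem hdia x [] (Ne.symm hak) s
      rw [List.nil_append, List.nil_append] at hswap
      rw [hswap, pathProd_cons, ih, comm_sign, hd, pow_succ, List.cons_append, pathProd_cons]
      noncomm_ring

include hidem hdia in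
lemma pathProd_reverse (x : Fin n → Bool) (ks : List (Fin n)) :
    pathProd p x ks = (-1 : A) ^ epsExp ks * pathProd p x ks.reverse := by
  induction ks generalizing x with
  | nil => simp [epsExp]
  | cons k t ih =>
    rw [pathProd_rotate p hidem hdia x k t, pathProd_append p hidem x t [k], ih x,
      List.reverse_cons, pathProd_append p hidem x t.reverse [k],
      foldl_perm (t.reverse_perm) x]
    rw [show epsExp (k :: t) = distCount k t + epsExp t from rfl, pow_add]
    noncomm_ring

end Paths

lemma distCount_perm {k : Fin n} {t t' : List (Fin n)} (h : t.Perm t') :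
    distCount k t = distCount k t' := by
  unfold distCount
  exact (h.filter _).length_eq

lemma epsExp_perm : ∀ {ks ls : List (Fin n)}, ks.Perm ls → epsExp ks = epsExp ls := by
  intro ks ls h
  induction h with
  | nil => rfl
  | cons a h ih =>
    show distCount a _ + _ = distCount a _ + _
    rw [distCount_perm h, ih]
  | swap a b t =>
    show distCount b (a :: t) + (distCount a t + epsExp t)
        = distCount a (b :: t) + (distCount b t + epsExp t)
    have h1 : distCount b (a :: t) = (if a ≠ b then 1 else 0) + distCount b t := by
      simp only [distCount, List.filter_cons]
      split_ifs <;> simp_all <;> omega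
    have h2 : distCount a (b :: t) = (if b ≠ a then 1 else 0) + distCount a t := by
      simp only [distCount, List.filter_cons]
      split_ifs <;> simp_all <;> omega
    rw [h1, h2, show (if a ≠ b then 1 else 0) = (if b ≠ a then 1 else 0) by
      simp [ne_comm]]
    omega
  | trans _ _ ih1 ih2 => exact ih1.trans ih2

lemma epsExp_even : ∀ (m : ℕ) (ks : List (Fin n)), ks.length ≤ m →
    (∀ v, Even (ks.count v)) → Even (epsExp ks) := by
  intro m
  induction m with
  | zero =>
    intro ks hlen _
    interval_cases h : ks.length
    · rw [List.length_eq_zero_iff.mp h]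
      simp [epsExp]
  | succ m ih =>
    intro ks hlen hcount
    match ks with
    | [] => simp [epsExp]
    | k :: t =>
      have hk : k ∈ t := by
        have h1 := hcount k
        rw [List.count_cons_self, Nat.even_add_one] at h1
        have h2 : t.count k ≠ 0 := by
          intro h; rw [h] at h1; exact h1 Even.zero
        exact List.count_pos_iff.mp (Nat.pos_of_ne_zero h2)
      have hperm : (k :: t).Perm (k :: k :: t.erase k) :=
        List.Perm.cons k (List.perm_cons_erase hk)
      rw [epsExp_perm hperm]
      set s := t.erase k with hs
      have hsc : ∀ v, Even (s.count v) := by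
        intro v
        have h1 := hcount v
        have h2 : (k :: t).count v = (k :: k :: s).count v := hperm.count_eq v
        rcases eq_or_ne v k with rfl | hvk
        · rw [h2, List.count_cons_self, List.count_cons_self] at h1
          rcases h1 with ⟨c, hc⟩
          exact ⟨c - 1, by omega⟩
        · rw [h2, List.count_cons_of_ne hvk.symm, List.count_cons_of_ne hvk.symm] at h1
          exact h1
      have hslen : s.length ≤ m := by
        have h3 : s.length = t.length - 1 := by rw [hs]; exact List.length_erase_of_mem hk
        simp only [List.length_cons] at hlen
        omega
      have hinner : Even (epsExp s) := ih s hslen hsc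
      show Even (distCount k (k :: s) + (distCount k s + epsExp s))
      have : distCount k (k :: s) = distCount k s := by simp [distCount]
      rw [this]
      rcases hinner with ⟨c, hc⟩
      exact ⟨distCount k s + c, by omega⟩

end HC

/-- Let `A` be a unital C*-algebra and `p` a family of projections
indexed by the vertices of `Q_n` satisfying (GP1) and (GP2).  If `μ = [x; k₁…kₘ]` and
`ν = [x; ℓ₁…ℓ_{m'}]` are two loops at the same vertex `x`, then `p_μ p_ν = p_ν p_μ`. -/
theorem pathProd_loops_commute {n : ℕ} (hn : 1 ≤ n)
    {A : Type*} [CStarAlgebra A]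
    (p : (Fin n → Bool) → A)
    (hproj : ∀ x, IsSelfAdjoint (p x) ∧ p x * p x = p x)
    (hGP1e : ∑ x ∈ Finset.univ.filter (fun x => hcEven x), p x = 1)
    (hGP1o : ∑ x ∈ Finset.univ.filter (fun x => ¬ hcEven x), p x = 1)
    (hGP2 : ∀ i j, hcEven i → ¬ hcEven j → ¬ hcAdj i j → p i * p j = 0)
    (x : Fin n → Bool) (ks ls : List (Fin n))
    (hks : ks.foldl hcFlip x = x) (hls : ls.foldl hcFlip x = x) :
    pathProd p x ks * pathProd p x ls = pathProd p x ls * pathProd p x ks := by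
  have hidem : ∀ y, p y * p y = p y := fun y => (hproj y).2
  have hdia : ∀ (z : Fin n → Bool) (k l : Fin n), k ≠ l →
      p z * p (hcFlip z k) * p (hcFlip (hcFlip z k) l)
        = - (p z * p (hcFlip z l) * p (hcFlip (hcFlip z k) l)) := by
    intro z k l hkl
    have h := HC.diamond p hproj hGP1e hGP1o hGP2 (z := z) hkl
    rwa [HC.flip_comm z l k] at h
  have h1 : pathProd p x ks * pathProd p x ls = pathProd p x (ks ++ ls) := by
    rw [HC.pathProd_append p hidem x ks ls, hks]
  have h2 : pathProd p x ls * pathProd p x ks = pathProd p x (ls ++ ks) := by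
    rw [HC.pathProd_append p hidem x ls ks, hls]
  rw [h1, h2]
  have hcount : ∀ v, Even ((ks ++ ls).count v) := by
    intro v
    rw [List.count_append]
    exact (HC.loop_count_even hks v).add (HC.loop_count_even hls v)
  have heps : Even (HC.epsExp (ks ++ ls)) :=
    HC.epsExp_even (ks ++ ls).length _ le_rfl hcount
  have h3 := HC.pathProd_reverse p hidem hdia x (ks ++ ls)
  rw [heps.neg_one_pow, one_mul, List.reverse_append] at h3
  rw [h3, HC.pathProd_append p hidem x ls.reverse ks.reverse,
    HC.foldl_perm (ls.reverse_perm) x, hls]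
  have hepsls : Even (HC.epsExp ls) :=
    HC.epsExp_even ls.length _ le_rfl (HC.loop_count_even hls)
  have h4 := HC.pathProd_reverse p hidem hdia x ls
  rw [hepsls.neg_one_pow, one_mul] at h4
  have hepsks : Even (HC.epsExp ks) :=
    HC.epsExp_even ks.length _ le_rfl (HC.loop_count_even hks)
  have h5 := HC.pathProd_reverse p hidem hdia x ks
  rw [hepsks.neg_one_pow, one_mul] at h5
  rw [← h4, ← h5, HC.pathProd_append p hidem x ls ks, hls]
end
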